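/- With the radial-return update of the von Mises model with linear kinematic hardening, the norm of the updated relative stress equals |I_dev σ_new − β_new| = min(|σ*|, σ_Y). Consequently the yield function Ψ(σ_new, β_new) = |I_dev σ_new − β_new| − σ_Y satisfies Ψ(σ_new, β_new) ≤ 0, with equality if and only if |σ*| ≥ σ_Y (the plastic case). -/

import Mathlib

open Matrix

noncomputable section

/-- Symmetric-matrix setting: we work with 3×3 real matrices. -/
abbrev Mat3 : Type := Matrix (Fin 3) (Fin 3) ℝ

/-- Deviatoric projector: `I_dev A = A - (1/3) tr(A) • 1`. -/
def Idev (A : Mat3) : Mat3 := A - ((1 / 3 : ℝ) * A.trace) • (1 : Mat3)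

/-- Elastic tensor: `C A = κ tr(A) • 1 + 2μ • I_dev A`. -/
def Cel (κ μ : ℝ) (A : Mat3) : Mat3 :=
  (κ * A.trace) • (1 : Mat3) + (2 * μ) • Idev A

/-- Frobenius inner product `⟪A, B⟫ = tr(Aᵀ B)`. -/
def finner (A B : Mat3) : ℝ := (Aᵀ * B).trace

/-- Frobenius norm `|A| = ⟪A, A⟫^{1/2}`. -/
def fnorm (A : Mat3) : ℝ := Real.sqrt (finner A A)

lemma finner_self_eq (A : Mat3) : finner A A = ∑ j, ∑ k, (A k j)^2 := by
  simp [finner, Matrix.trace, Matrix.mul_apply, Matrix.diag, sq]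

lemma finner_self_nonneg (A : Mat3) : 0 ≤ finner A A := by
  rw [finner_self_eq]
  positivity

lemma finner_self_pos (A : Mat3) (h : A ≠ 0) : 0 < finner A A := by
  rcases (finner_self_nonneg A).lt_or_eq with h1 | h1
  · exact h1
  · exfalso; apply h
    rw [finner_self_eq] at h1
    ext k j
    have := (Finset.sum_eq_zero_iff_of_nonneg (fun j _ => Finset.sum_nonneg (fun k _ => sq_nonneg (A k j)))).mp h1.symm j (Finset.mem_univ j)
    have := (Finset.sum_eq_zero_iff_of_nonneg (fun k _ => sq_nonneg (A k j))).mp this k (Finset.mem_univ k)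
    simpa using sq_eq_zero_iff.mp this

lemma fnorm_pos (A : Mat3) (h : A ≠ 0) : 0 < fnorm A :=
  Real.sqrt_pos.mpr (finner_self_pos A h)

lemma fnorm_smul (c : ℝ) (A : Mat3) : fnorm (c • A) = |c| * fnorm A := by
  have : finner (c • A) (c • A) = c^2 * finner A A := by
    simp [finner, Matrix.trace, Matrix.mul_apply, Matrix.diag, Finset.mul_sum, sq]
    ring_nf
  rw [fnorm, this, Real.sqrt_mul (sq_nonneg c), Real.sqrt_sq_eq_abs, fnorm]

lemma trace_Idev (A : Mat3) : (Idev A).trace = 0 := by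
  simp [Idev]; ring

lemma Idev_of_trace_zero (A : Mat3) (h : A.trace = 0) : Idev A = A := by
  simp [Idev, h]

theorem radial_return_yield_consistency
    (κ μ ϖ σY : ℝ) (hκ : 0 < κ) (hμ : 0 < μ) (hϖ : 0 < ϖ) (hσY : 0 < σY)
    (ε εp β : Mat3) (hε : ε.IsSymm) (hεp : εp.IsSymm) (hβ : β.IsSymm)
    (hβdev : Idev β = β)
    (σ0 σstar : Mat3) (hσ0 : σ0 = Cel κ μ (ε - εp)) (hσstar : σstar = Idev σ0 - β)
    (hne : σstar ≠ 0)
    (γ : ℝ) (hγ : γ = 1 - σY / fnorm σstar)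
    (σnew βnew : Mat3)
    (hσnew : σnew = σ0 - ((2 * μ / (2 * μ + ϖ)) * max γ 0) • σstar)
    (hβnew : βnew = β + ((ϖ / (2 * μ + ϖ)) * max γ 0) • σstar) :
    fnorm (Idev σnew - βnew) = min (fnorm σstar) σY ∧
    fnorm (Idev σnew - βnew) - σY ≤ 0 ∧
    (fnorm (Idev σnew - βnew) - σY = 0 ↔ σY ≤ fnorm σstar) := by
  set N := fnorm σstar with hN
  have hNpos : 0 < N := fnorm_pos σstar hne
  set m := max γ 0 with hm
  have hden : (2 * μ + ϖ) ≠ 0 := by positivity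
  have htr : σstar.trace = 0 := by
    rw [hσstar, Matrix.trace_sub, trace_Idev, ← hβdev, trace_Idev, sub_zero]
  have key : Idev σnew - βnew = (1 - m) • σstar := by
    have h1 : Idev σnew = Idev σ0 - ((2 * μ / (2 * μ + ϖ)) * m) • σstar := by
      rw [hσnew]
      simp only [Idev, Matrix.trace_sub, Matrix.trace_smul, htr, smul_eq_mul,
        mul_zero, sub_zero]
      module
    rw [h1, hβnew, hσstar]
    have hc : (2 * μ / (2 * μ + ϖ)) * m + (ϖ / (2 * μ + ϖ)) * m = m := by
      field_simp
    rw [show (1 - m) = 1 - ((2 * μ / (2 * μ + ϖ)) * m + (ϖ / (2 * μ + ϖ)) * m) by rw [hc]]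
    module
  have hnorm : fnorm (Idev σnew - βnew) = min N σY := by
    rw [key, fnorm_smul, ← hN]
    rcases le_or_gt γ 0 with hg | hg
    · have hm0 : m = 0 := max_eq_right hg
      have hNle : N ≤ σY := by
        rw [hγ, sub_nonpos, le_div_iff₀ hNpos, one_mul] at hg
        exact hg
      rw [hm0, min_eq_left hNle]
      simp
    · have hm0 : m = γ := max_eq_left hg.le
      have h1m : 1 - m = σY / N := by rw [hm0, hγ]; ring
      have hpos : 0 ≤ σY / N := by positivity
      have hle : σY ≤ N := by
        rw [hγ, sub_pos, div_lt_one hNpos] at hg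
        exact hg.le
      rw [h1m, abs_of_nonneg hpos, min_eq_right hle]
      field_simp
  refine ⟨hnorm, ?_, ?_⟩
  · rw [hnorm]; simp [min_le_iff]
  · rw [hnorm]
    constructor
    · intro h
      rcases min_cases N σY with ⟨he, hle⟩ | ⟨he, hle⟩
      · rw [he] at h; linarith
      · exact hle.le
    · intro h
      rw [min_eq_right h]; ring
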